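/- arXiv:1809.02777 — 2 statements merged into one kernel-verified Lean document; each statement's English description precedes it below -/
import Mathlib

section
/- Let U ∈ ℂ^{N_r×N_s} satisfy U^H U = I_{N_s}, let W_D ∈ ℂ^{N_s×N_s} be invertible, let Σ, W_α ∈ ℝ^{N_s×N_s} be invertible diagonal matrices, let D_q ∈ ℝ^{N_s×N_s} be a diagonal matrix with nonnegative entries, and let σ_n² > 0. Set G = W_D^H W_α U^H, K = G U Σ, and Φ = σ_n² G G^H + W_D^H D_q² W_D. Then K and Φ are invertible and (K^H Φ⁻¹ K)⁻¹ = σ_n² Σ⁻² + Σ⁻² W_α⁻² D_q². -/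
open Matrix

/-- A diagonal matrix with nonzero diagonal entries has the expected inverse. -/
lemma diag_inv_aux {n : ℕ} (v : Fin n → ℂ) (hv : ∀ i, v i ≠ 0) :
    (Matrix.diagonal v)⁻¹ = Matrix.diagonal (fun i => (v i)⁻¹) := by
  apply Matrix.inv_eq_right_inv
  rw [Matrix.diagonal_mul_diagonal]
  have : (fun i => v i * (v i)⁻¹) = fun _ => (1 : ℂ) := by
    funext i; exact mul_inv_cancel₀ (hv i)
  rw [this, Matrix.diagonal_one]

/-- Conjugate transpose of a real-entried diagonal matrix. -/
lemma diag_conjT_aux {n : ℕ} (v : Fin n → ℝ) :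
    (Matrix.diagonal (fun i => (v i : ℂ)))ᴴ = Matrix.diagonal (fun i => (v i : ℂ)) := by
  have h : (star fun i : Fin n => ((v i : ℂ))) = fun i => ((v i : ℂ)) := by
    funext i; exact Complex.conj_ofReal _
  rw [Matrix.diagonal_conjTranspose, h]

/-- Closed form of the Cramer–Rao Lower Bound (equations (19)–(21)): with
`G = W_Dᴴ W_α Uᴴ`, `K = G U Σ` and `Φ = σₙ² G Gᴴ + W_Dᴴ D_q² W_D`, the matrices
`K` and `Φ` are invertible and `(Kᴴ Φ⁻¹ K)⁻¹ = σₙ² Σ⁻² + Σ⁻² W_α⁻² D_q²`. -/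
theorem stmt_6
    (Nr Ns : ℕ) (hNr : 0 < Nr) (hNs : 0 < Ns) (hNrNs : Ns ≤ Nr)
    (U : Matrix (Fin Nr) (Fin Ns) ℂ) (hU : Uᴴ * U = 1)
    (WD : Matrix (Fin Ns) (Fin Ns) ℂ) (hWD : IsUnit WD.det)
    (σ : Fin Ns → ℝ) (hσ : ∀ i, σ i ≠ 0)
    (α : Fin Ns → ℝ) (hα : ∀ i, α i ≠ 0)
    (dq : Fin Ns → ℝ) (hdq : ∀ i, 0 ≤ dq i)
    (σn2 : ℝ) (hσn2 : 0 < σn2)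
    (G : Matrix (Fin Ns) (Fin Nr) ℂ)
    (hG : G = WDᴴ * Matrix.diagonal (fun i => (α i : ℂ)) * Uᴴ)
    (K : Matrix (Fin Ns) (Fin Ns) ℂ)
    (hK : K = G * U * Matrix.diagonal (fun i => (σ i : ℂ)))
    (Φ : Matrix (Fin Ns) (Fin Ns) ℂ)
    (hΦ : Φ = σn2 • (G * Gᴴ) +
      WDᴴ * (Matrix.diagonal (fun i => (dq i : ℂ))) ^ 2 * WD) :
    IsUnit K.det ∧ IsUnit Φ.det ∧
    (Kᴴ * Φ⁻¹ * K)⁻¹ =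
      σn2 • ((Matrix.diagonal (fun i => (σ i : ℂ))) ^ 2)⁻¹ +
      ((Matrix.diagonal (fun i => (σ i : ℂ))) ^ 2)⁻¹ *
        ((Matrix.diagonal (fun i => (α i : ℂ))) ^ 2)⁻¹ *
        (Matrix.diagonal (fun i => (dq i : ℂ))) ^ 2 := by
  set Dα : Matrix (Fin Ns) (Fin Ns) ℂ := Matrix.diagonal (fun i => (α i : ℂ)) with hDα
  set Dσ : Matrix (Fin Ns) (Fin Ns) ℂ := Matrix.diagonal (fun i => (σ i : ℂ)) with hDσ
  set Dq : Matrix (Fin Ns) (Fin Ns) ℂ := Matrix.diagonal (fun i => (dq i : ℂ)) with hDq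
  have hαC : ∀ i, (α i : ℂ) ≠ 0 := fun i => by exact_mod_cast hα i
  have hσC : ∀ i, (σ i : ℂ) ≠ 0 := fun i => by exact_mod_cast hσ i
  have hDαH : Dαᴴ = Dα := diag_conjT_aux α
  have hDσH : Dσᴴ = Dσ := diag_conjT_aux σ
  -- K = WDᴴ * (Dα * Dσ)
  have hK' : K = WDᴴ * (Dα * Dσ) := by
    rw [hK, hG]
    calc WDᴴ * Dα * Uᴴ * U * Dσ = WDᴴ * Dα * (Uᴴ * U) * Dσ := by
          simp only [Matrix.mul_assoc]
      _ = WDᴴ * (Dα * Dσ) := by rw [hU]; simp [Matrix.mul_assoc]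
  have hdetWDH : IsUnit WDᴴ.det := by
    rw [Matrix.det_conjTranspose]; exact hWD.star
  have hdetDα : IsUnit Dα.det := by
    rw [hDα, Matrix.det_diagonal]
    exact isUnit_iff_ne_zero.2 (Finset.prod_ne_zero_iff.2 fun i _ => hαC i)
  have hdetDσ : IsUnit Dσ.det := by
    rw [hDσ, Matrix.det_diagonal]
    exact isUnit_iff_ne_zero.2 (Finset.prod_ne_zero_iff.2 fun i _ => hσC i)
  have hdetK : IsUnit K.det := by
    rw [hK', Matrix.det_mul, Matrix.det_mul]
    exact hdetWDH.mul (hdetDα.mul hdetDσ)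
  -- middle diagonal matrix
  set m : Fin Ns → ℝ := fun i => σn2 * α i ^ 2 + dq i ^ 2 with hm
  have hmpos : ∀ i, 0 < m i := fun i =>
    add_pos_of_pos_of_nonneg
      (mul_pos hσn2 (lt_of_le_of_ne (sq_nonneg _) (Ne.symm (pow_ne_zero 2 (hα i)))))
      (sq_nonneg _)
  have hmC : ∀ i, ((m i : ℂ)) ≠ 0 := fun i => by
    exact_mod_cast (hmpos i).ne'
  set M : Matrix (Fin Ns) (Fin Ns) ℂ := Matrix.diagonal (fun i => (m i : ℂ)) with hM
  have hGGH : G * Gᴴ = WDᴴ * (Dα * Dα) * WD := by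
    rw [hG]
    simp only [Matrix.conjTranspose_mul, Matrix.conjTranspose_conjTranspose, hDαH]
    calc WDᴴ * Dα * Uᴴ * (U * (Dα * WD))
        = WDᴴ * Dα * (Uᴴ * U) * (Dα * WD) := by simp only [Matrix.mul_assoc]
      _ = WDᴴ * (Dα * Dα) * WD := by rw [hU]; simp [Matrix.mul_assoc]
  have hΦ' : Φ = WDᴴ * M * WD := by
    rw [hΦ, hGGH]
    have hMeq : M = σn2 • (Dα * Dα) + Dq ^ 2 := by
      ext i j
      rcases eq_or_ne i j with rfl | h
      · simp [hM, hDα, hDq, pow_two, Matrix.diagonal_mul_diagonal,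
          Matrix.diagonal_apply_eq, hm, Matrix.smul_apply]
      · simp [hM, hDα, hDq, pow_two, Matrix.diagonal_mul_diagonal,
          Matrix.diagonal_apply_ne _ h, Matrix.smul_apply]
    rw [hMeq]
    simp only [Matrix.mul_add, Matrix.add_mul, Matrix.mul_smul, Matrix.smul_mul]
  have hdetM : IsUnit M.det := by
    rw [hM, Matrix.det_diagonal]
    exact isUnit_iff_ne_zero.2 (Finset.prod_ne_zero_iff.2 fun i _ => hmC i)
  have hdetΦ : IsUnit Φ.det := by
    rw [hΦ', Matrix.det_mul, Matrix.det_mul]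
    exact (hdetWDH.mul hdetM).mul hWD
  refine ⟨hdetK, hdetΦ, ?_⟩
  -- invert Φ
  have hΦinv : Φ⁻¹ = WD⁻¹ * (M⁻¹ * (WDᴴ)⁻¹) := by
    rw [hΦ', Matrix.mul_inv_rev, Matrix.mul_inv_rev]
  have hKH : Kᴴ = Dσ * Dα * WD := by
    rw [hK']
    simp only [Matrix.conjTranspose_mul, Matrix.conjTranspose_conjTranspose, hDαH, hDσH]
  have hmid : Kᴴ * Φ⁻¹ * K = Dσ * Dα * M⁻¹ * (Dα * Dσ) := by
    rw [hKH, hΦinv, hK']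
    have h1 : WD * (WD⁻¹ * (M⁻¹ * WDᴴ⁻¹)) = M⁻¹ * WDᴴ⁻¹ := by
      rw [← Matrix.mul_assoc, Matrix.mul_nonsing_inv _ hWD, Matrix.one_mul]
    have h2 : WDᴴ⁻¹ * (WDᴴ * (Dα * Dσ)) = Dα * Dσ := by
      rw [← Matrix.mul_assoc, Matrix.nonsing_inv_mul _ hdetWDH, Matrix.one_mul]
    calc Dσ * Dα * WD * (WD⁻¹ * (M⁻¹ * WDᴴ⁻¹)) * (WDᴴ * (Dα * Dσ))
        = Dσ * Dα * (WD * (WD⁻¹ * (M⁻¹ * WDᴴ⁻¹))) * (WDᴴ * (Dα * Dσ)) := by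
          simp only [Matrix.mul_assoc]
      _ = Dσ * Dα * (M⁻¹ * WDᴴ⁻¹) * (WDᴴ * (Dα * Dσ)) := by rw [h1]
      _ = Dσ * Dα * M⁻¹ * (WDᴴ⁻¹ * (WDᴴ * (Dα * Dσ))) := by
          simp only [Matrix.mul_assoc]
      _ = Dσ * Dα * M⁻¹ * (Dα * Dσ) := by rw [h2]
  -- now everything is diagonal
  have hMinv : M⁻¹ = Matrix.diagonal (fun i => ((m i : ℂ))⁻¹) := diag_inv_aux _ hmC
  have hσ2 : ∀ i, (σ i : ℂ) * (σ i : ℂ) ≠ 0 := fun i => mul_ne_zero (hσC i) (hσC i)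
  have hα2 : ∀ i, (α i : ℂ) * (α i : ℂ) ≠ 0 := fun i => mul_ne_zero (hαC i) (hαC i)
  rw [hmid, hMinv, hDα, hDσ, hDq]
  simp only [pow_two, Matrix.diagonal_mul_diagonal]
  rw [diag_inv_aux _ hσ2, diag_inv_aux _ hα2,
    diag_inv_aux _ (fun i => mul_ne_zero (mul_ne_zero (mul_ne_zero (hσC i) (hαC i))
      (inv_ne_zero (hmC i))) (mul_ne_zero (hαC i) (hσC i)))]
  ext i j
  rcases eq_or_ne i j with rfl | h
  · simp only [Matrix.add_apply, Matrix.smul_apply, Matrix.mul_apply,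
      Matrix.diagonal_apply_eq, Matrix.diagonal_mul_diagonal]
    have hmi := hmC i
    have hai := hαC i
    have hsi := hσC i
    simp only [hm, Complex.real_smul]
    field_simp
    push_cast
    ring
  · simp [Matrix.diagonal_apply_ne _ h, Matrix.diagonal_mul_diagonal]
end

section
/- Let U ∈ ℂ^{N_r×N_s} satisfy U^H U = I_{N_s}, let W_D ∈ ℂ^{N_s×N_s} be invertible, let Σ, W_α ∈ ℝ^{N_s×N_s} be invertible diagonal matrices, let D_q ∈ ℝ^{N_s×N_s} be a diagonal matrix with nonnegative entries, let σ_n² > 0 and p > 0, and write Σ = diag(σ_1,…,σ_{N_s}), W_α = diag(1−f_1,…,1−f_{N_s}) with 0 ≤ f_i < 1, and D_q² = diag((1−f_i)f_i l_i) with l_i ≥ 0. Set G = W_D^H W_α U^H, K = G U Σ, and Φ = σ_n² G G^H + W_D^H D_q² W_D. Then p^{N_s} · det(K^H Φ⁻¹ K + (1/p) I_{N_s}) = ∏_{i=1}^{N_s} ( p σ_i²/(σ_n² + f_i l_i/(1−f_i)) + 1 ), i.e., the capacity N_s log₂ p + log₂ det(K^H Φ⁻¹ K + (1/p) I_{N_s})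 equals Σ_{i=1}^{N_s} log₂(q(b_i) + 1) with q(b_i) = p σ_i²/(σ_n² + f_i l_i/(1−f_i)). -/
/-!
Because `Uᴴ U = I`, the analog combiner drops out: `K = W_Dᴴ (W_α Σ)` and
`Φ = W_Dᴴ D W_D` with `D = σₙ² W_α² + D_q²` diagonal. The congruence by `W_D` cancels in
`Kᴴ Φ⁻¹ K`, leaving the diagonal matrix `diag(σᵢ² (1 - fᵢ)² / Dᵢᵢ)`, so the determinant
splits into one scalar factor per RF path, and `D_q² = diag((1 - fᵢ) fᵢ lᵢ)` turns each
factor into the stated one.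
-/

open Matrix

namespace Matrix

variable {m n k α : Type*} [Fintype n]

theorem mul_conjTranspose_mul_self_mul_conjTranspose [Fintype m] [DecidableEq n] [Semiring α]
    [StarRing α] {U : Matrix m n α} (hU : Uᴴ * U = 1) (X : Matrix k n α) :
    X * Uᴴ * (X * Uᴴ)ᴴ = X * Xᴴ := by
  rw [conjTranspose_mul, conjTranspose_conjTranspose, Matrix.mul_assoc, ← Matrix.mul_assoc Uᴴ,
    hU, Matrix.one_mul]

theorem smul_mul_conjTranspose_add_congr {R : Type*} [Semiring α] [StarRing α] [Monoid R]
    [DistribMulAction R α] [SMulCommClass R α α] [IsScalarTower R α α]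
    (r : R) (W A D : Matrix n n α) :
    r • (Wᴴ * A * (Wᴴ * A)ᴴ) + Wᴴ * D * W = Wᴴ * (r • (A * Aᴴ) + D) * W := by
  simp only [conjTranspose_mul, conjTranspose_conjTranspose, Matrix.mul_add, Matrix.add_mul,
    Matrix.mul_smul, Matrix.smul_mul, Matrix.mul_assoc]

theorem conjTranspose_mul_inv_mul_of_congr [DecidableEq n] [CommRing α] [StarRing α]
    {W : Matrix n n α} (hW : IsUnit W.det) (B D : Matrix n n α) :
    (Wᴴ * B)ᴴ * (Wᴴ * D * W)⁻¹ * (Wᴴ * B) = Bᴴ * D⁻¹ * B := by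
  have hWH : IsUnit Wᴴ.det := by rw [det_conjTranspose]; exact hW.star
  rw [conjTranspose_mul, conjTranspose_conjTranspose, mul_inv_rev, mul_inv_rev]
  simp only [Matrix.mul_assoc, mul_nonsing_inv_cancel_left _ _ hW,
    nonsing_inv_mul_cancel_left _ _ hWH]

theorem diagonal_conjTranspose_mul_inv_mul [DecidableEq n] [Field α] [StarRing α] (a : n → α)
    {d : n → α} (hd : ∀ i, d i ≠ 0) :
    (diagonal a)ᴴ * (diagonal d)⁻¹ * diagonal a = diagonal fun i => star (a i) * a i / d i := by
  have hinv : (diagonal d)⁻¹ = diagonal fun i => (d i)⁻¹ := by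
    refine inv_eq_left_inv ?_
    rw [diagonal_mul_diagonal, ← diagonal_one]
    exact congrArg diagonal (funext fun i => inv_mul_cancel₀ (hd i))
  rw [hinv, diagonal_conjTranspose, diagonal_mul_diagonal, diagonal_mul_diagonal]
  exact congrArg diagonal (funext fun i => by rw [Pi.star_apply, div_eq_mul_inv, mul_right_comm])

theorem diagonal_ofReal_conjTranspose_mul_inv_mul_add_smul_one [DecidableEq n] (x : n → ℝ)
    {d : n → ℝ} (hd : ∀ i, d i ≠ 0) (t : ℝ) :
    (diagonal fun i => (x i : ℂ))ᴴ * (diagonal fun i => (d i : ℂ))⁻¹ *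
        (diagonal fun i => (x i : ℂ)) + (t : ℂ) • 1 =
      diagonal fun i => ((x i ^ 2 / d i + t : ℝ) : ℂ) := by
  rw [diagonal_conjTranspose_mul_inv_mul _ fun i => Complex.ofReal_ne_zero.2 (hd i),
    smul_one_eq_diagonal, diagonal_add]
  refine congrArg diagonal (funext fun i => ?_)
  simp [sq]

end Matrix

theorem card_mul_logb_add_logb_re_of_pow_mul_eq_prod {ι : Type*} [Fintype ι] (b : ℝ) {p : ℝ}
    {z : ℂ} {x : ι → ℝ} (hp : 0 < p) (hx : ∀ i, 0 < x i)
    (h : (p : ℂ) ^ Fintype.card ι * z = ∏ i, (x i : ℂ)) :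
    Fintype.card ι * Real.logb b p + Real.logb b z.re = ∑ i, Real.logb b (x i) := by
  have hre : p ^ Fintype.card ι * z.re = ∏ i, x i := by
    simpa [← Complex.ofReal_pow, ← Complex.ofReal_prod] using congrArg Complex.re h
  have hz : z.re ≠ 0 := by
    rintro hz
    rw [hz, mul_zero] at hre
    exact (Finset.prod_pos fun i _ => hx i).ne hre
  rw [← Real.logb_pow, ← Real.logb_mul (pow_ne_zero _ hp.ne') hz, hre,
    Real.logb_prod _ _ fun i _ => (hx i).ne']

theorem capacity_factor_eq {p σ s a e d : ℝ} (hp : p ≠ 0) (hs : 0 < s) (ha : 0 < a)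
    (he : 0 ≤ e) (hd : d = a * e) :
    p * ((a * σ) ^ 2 / (s * a ^ 2 + d) + p⁻¹) = p * σ ^ 2 / (s + e / a) + 1 := by
  have : 0 < s * a + e := by positivity
  subst hd
  field_simp

theorem stmt_9_general
    (Nr Ns : ℕ)
    (U : Matrix (Fin Nr) (Fin Ns) ℂ) (hU : Uᴴ * U = 1)
    (WD : Matrix (Fin Ns) (Fin Ns) ℂ) (hWD : IsUnit WD.det)
    (σ l f : Fin Ns → ℝ)
    (hf : ∀ i, 0 ≤ f i ∧ f i < 1)
    (dq : Fin Ns → ℝ)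
    (hdq2 : ∀ i, (dq i) ^ 2 = (1 - f i) * f i * l i)
    (σn2 p : ℝ) (hσn2 : 0 < σn2) (hp : 0 < p)
    (G : Matrix (Fin Ns) (Fin Nr) ℂ)
    (hG : G = WDᴴ * Matrix.diagonal (fun i => ((1 - f i : ℝ) : ℂ)) * Uᴴ)
    (K : Matrix (Fin Ns) (Fin Ns) ℂ)
    (hK : K = G * U * Matrix.diagonal (fun i => (σ i : ℂ)))
    (Φ : Matrix (Fin Ns) (Fin Ns) ℂ)
    (hΦ : Φ = σn2 • (G * Gᴴ) +
      WDᴴ * (Matrix.diagonal (fun i => (dq i : ℂ))) ^ 2 * WD) :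
    (p : ℂ) ^ Ns *
      (Kᴴ * Φ⁻¹ * K + (p : ℂ)⁻¹ • (1 : Matrix (Fin Ns) (Fin Ns) ℂ)).det =
      ∏ i, ((p * (σ i) ^ 2 / (σn2 + f i * l i / (1 - f i)) + 1 : ℝ) : ℂ) ∧
    (Ns : ℝ) * Real.logb 2 p +
      Real.logb 2
        ((Kᴴ * Φ⁻¹ * K + (p : ℂ)⁻¹ • (1 : Matrix (Fin Ns) (Fin Ns) ℂ)).det.re) =
      ∑ i, Real.logb 2 (p * (σ i) ^ 2 / (σn2 + f i * l i / (1 - f i)) + 1) := by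
  have ha : ∀ i, 0 < 1 - f i := fun i => sub_pos.2 (hf i).2
  have hfl : ∀ i, 0 ≤ f i * l i := fun i =>
    nonneg_of_mul_nonneg_right (by rw [← mul_assoc, ← hdq2]; positivity) (ha i)
  have hd : ∀ i, σn2 * (1 - f i) ^ 2 + dq i ^ 2 ≠ 0 := fun i => by have := ha i; positivity
  have hK' : K = WDᴴ * diagonal fun i => (((1 - f i) * σ i : ℝ) : ℂ) := by
    rw [hK, hG, Matrix.mul_assoc _ Uᴴ U, hU, Matrix.mul_one, Matrix.mul_assoc,
      diagonal_mul_diagonal]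
    push_cast
    rfl
  have hΦ' :
      Φ = WDᴴ * (diagonal fun i => ((σn2 * (1 - f i) ^ 2 + dq i ^ 2 : ℝ) : ℂ)) * WD := by
    rw [hΦ, hG, mul_conjTranspose_mul_self_mul_conjTranspose hU, smul_mul_conjTranspose_add_congr,
      diagonal_conjTranspose, diagonal_mul_diagonal, diagonal_pow, ← diagonal_smul, diagonal_add]
    refine congrArg (fun M => WDᴴ * M * WD) (congrArg diagonal (funext fun i => ?_))
    simp [sq]
  have hdiag : Kᴴ * Φ⁻¹ * K + (p : ℂ)⁻¹ • (1 : Matrix (Fin Ns) (Fin Ns) ℂ) =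
      diagonal fun i =>
        ((((1 - f i) * σ i) ^ 2 / (σn2 * (1 - f i) ^ 2 + dq i ^ 2) + p⁻¹ : ℝ) : ℂ) := by
    rw [hK', hΦ', conjTranspose_mul_inv_mul_of_congr hWD, ← Complex.ofReal_inv,
      diagonal_ofReal_conjTranspose_mul_inv_mul_add_smul_one _ hd]
  have hdet : (p : ℂ) ^ Ns *
      (Kᴴ * Φ⁻¹ * K + (p : ℂ)⁻¹ • (1 : Matrix (Fin Ns) (Fin Ns) ℂ)).det =
      ∏ i, ((p * (σ i) ^ 2 / (σn2 + f i * l i / (1 - f i)) + 1 : ℝ) : ℂ) := by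
    rw [hdiag, det_diagonal, ← Fin.prod_const Ns (p : ℂ), ← Finset.prod_mul_distrib]
    refine Finset.prod_congr rfl fun i _ => ?_
    rw [← Complex.ofReal_mul,
      capacity_factor_eq hp.ne' hσn2 (ha i) (hfl i) (by rw [hdq2, mul_assoc])]
  have hx : ∀ i, 0 < p * σ i ^ 2 / (σn2 + f i * l i / (1 - f i)) + 1 := fun i => by
    have := ha i; have := hfl i; positivity
  refine ⟨hdet, ?_⟩
  simpa only [Fintype.card_fin] using
    card_mul_logb_add_logb_re_of_pow_mul_eq_prod 2 hp hx (by rwa [Fintype.card_fin])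

/-- Main closed-form capacity expression: with `Uᴴ U = I`, `W_D` invertible,
`Σ = diag(σᵢ)` and `W_α = diag(1 - fᵢ)` invertible real diagonal, `D_q ≥ 0` real
diagonal with `D_q² = diag((1 - fᵢ) fᵢ lᵢ)`, `G = W_Dᴴ W_α Uᴴ`, `K = G U Σ` and
`Φ = σₙ² G Gᴴ + W_Dᴴ D_q² W_D`, one has
`p^{N_s} det(Kᴴ Φ⁻¹ K + (1/p) I) = ∏ᵢ (p σᵢ²/(σₙ² + fᵢ lᵢ/(1 - fᵢ)) + 1)`,
i.e. `N_s log₂ p + log₂ det(Kᴴ Φ⁻¹ K + (1/p) I) = Σᵢ log₂(q(bᵢ) + 1)` with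
`q(bᵢ) = p σᵢ²/(σₙ² + fᵢ lᵢ/(1 - fᵢ))`. -/
theorem stmt_9
    (Nr Ns : ℕ) (hNr : 0 < Nr) (hNs : 0 < Ns) (hNrNs : Ns ≤ Nr)
    (U : Matrix (Fin Nr) (Fin Ns) ℂ) (hU : Uᴴ * U = 1)
    (WD : Matrix (Fin Ns) (Fin Ns) ℂ) (hWD : IsUnit WD.det)
    (σ l f : Fin Ns → ℝ)
    (hσ : ∀ i, σ i ≠ 0) (hl : ∀ i, 0 ≤ l i)
    (hf : ∀ i, 0 ≤ f i ∧ f i < 1)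
    (dq : Fin Ns → ℝ) (hdq : ∀ i, 0 ≤ dq i)
    (hdq2 : ∀ i, (dq i) ^ 2 = (1 - f i) * f i * l i)
    (σn2 p : ℝ) (hσn2 : 0 < σn2) (hp : 0 < p)
    (G : Matrix (Fin Ns) (Fin Nr) ℂ)
    (hG : G = WDᴴ * Matrix.diagonal (fun i => ((1 - f i : ℝ) : ℂ)) * Uᴴ)
    (K : Matrix (Fin Ns) (Fin Ns) ℂ)
    (hK : K = G * U * Matrix.diagonal (fun i => (σ i : ℂ)))
    (Φ : Matrix (Fin Ns) (Fin Ns) ℂ)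
    (hΦ : Φ = σn2 • (G * Gᴴ) +
      WDᴴ * (Matrix.diagonal (fun i => (dq i : ℂ))) ^ 2 * WD) :
    (p : ℂ) ^ Ns *
      (Kᴴ * Φ⁻¹ * K + (p : ℂ)⁻¹ • (1 : Matrix (Fin Ns) (Fin Ns) ℂ)).det =
      ∏ i, ((p * (σ i) ^ 2 / (σn2 + f i * l i / (1 - f i)) + 1 : ℝ) : ℂ) ∧
    (Ns : ℝ) * Real.logb 2 p +
      Real.logb 2
        ((Kᴴ * Φ⁻¹ * K + (p : ℂ)⁻¹ • (1 : Matrix (Fin Ns) (Fin Ns) ℂ)).det.re) =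
      ∑ i, Real.logb 2 (p * (σ i) ^ 2 / (σn2 + f i * l i / (1 - f i)) + 1) :=
  stmt_9_general Nr Ns U hU WD hWD σ l f hf dq hdq2 σn2 p hσn2 hp G hG K hK Φ hΦ
end
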